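/- The simplified de Bruijn graph S(2,3) is not word-representable. -/

import Mathlib

/-- Letters `x` and `y` alternate in the word `w`: after deleting all letters other than
`x` and `y`, no two consecutive letters of the remaining word are equal. -/
def Alternate {V : Type*} [DecidableEq V] (w : List V) (x y : V) : Prop :=
  (w.filter (fun z => decide (z = x ∨ z = y))).Chain' (· ≠ ·)

/-- A simple graph `G` is word-representable if there is a word over its vertex set,
containing every vertex, such that two distinct letters alternate in the word
if and only if they are adjacent in `G`. -/
def WordRepresentable {V : Type*} [DecidableEq V] (G : SimpleGraph V) : Prop :=
  ∃ w : List V, (∀ v : V, v ∈ w) ∧ ∀ x y : V, x ≠ y → (G.Adj x y ↔ Alternate w x y)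

/-- `rel` is an orientation of the simple graph `G`: every arc lies on an edge of `G`,
and every edge of `G` is oriented in exactly one of the two directions. -/
def IsOrientation {V : Type*} (G : SimpleGraph V) (rel : V → V → Prop) : Prop :=
  (∀ x y, rel x y → G.Adj x y) ∧ (∀ x y, G.Adj x y → (rel x y ↔ ¬ rel y x))

/-- An orientation `rel` of `G` is semi-transitive: it is acyclic, and for every directed
path `p 0 → p 1 → ⋯ → p k`, either the endpoints are non-adjacent in `G`, or there is an
arc `p i → p j` for all `i < j`. -/
def IsSemiTransitive {V : Type*} (G : SimpleGraph V) (rel : V → V → Prop) : Prop :=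
  (∀ v, ¬ Relation.TransGen rel v v) ∧
  ∀ (k : ℕ) (p : Fin (k + 1) → V),
    (∀ i : Fin k, rel (p i.castSucc) (p i.succ)) →
    (¬ G.Adj (p 0) (p (Fin.last k)) ∨ ∀ i j : Fin (k + 1), i < j → rel (p i) (p j))

/-- `v` is obtained from `u` by deleting the first letter and appending a letter at the end:
`v i = u (i+1)` for all `i < n - 1`. -/
def debruijnShift (n k : ℕ) (u v : Fin n → Fin k) : Prop :=
  ∀ (i : ℕ) (h : i + 1 < n), v ⟨i, Nat.lt_of_succ_lt h⟩ = u ⟨i + 1, h⟩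

/-- The simplified de Bruijn graph `S(n,k)`: vertices are words of length `n` over a
`k`-letter alphabet; distinct words are adjacent if one is obtained from the other by
deleting the first letter and appending a letter at the end. -/
def simplifiedDeBruijn (n k : ℕ) : SimpleGraph (Fin n → Fin k) :=
  SimpleGraph.fromRel (debruijnShift n k)

/-! Orient an edge `xy` of a graph represented by a word `w` from `x` to `y` when every prefix of
`w` contains at least as many `x`'s as `y`'s, i.e. when `x` occurs first. Along a directed path
`p₀ → ⋯ → pₖ` these prefix counts decrease, while alternation of `p₀` and `pₖ` bounds the counts
of `p₀` by those of `pₖ` plus one; so any two letters of the path alternate, and the orientation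
is semi-transitive.

In a semi-transitive orientation of a wheel with hub `h`, a rim vertex `u` with rim neighbours
`x`, `v` lies on a directed path `x u v` exactly when `h` lies on a directed path `x h v`.
Going once around the rim, the edge directions change an even number of times, and so does the
side of `h` on which the rim vertices lie; by the above, each rim vertex accounts for exactly one
of these changes, which is impossible when the rim is odd. `S(2,3)` contains the wheel with hub
`01` and rim `10, 11, 12, 20, 00`. -/

section Words

variable {V : Type*} [DecidableEq V]

def prefixCount (w : List V) (x : V) : ℕ → ℕ := fun n => (w.take n).count x

def AlternatesFrom (w : List V) (x y : V) : Prop :=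
  prefixCount w y ≤ prefixCount w x ∧ prefixCount w x ≤ prefixCount w y + 1

lemma alternatesFrom_iff_forall (w : List V) (x y : V) :
    AlternatesFrom w x y ↔
      ∀ n, prefixCount w y n ≤ prefixCount w x n ∧ prefixCount w x n ≤ prefixCount w y n + 1 := by
  simp only [AlternatesFrom, Pi.le_def, Pi.add_apply, Pi.one_apply, forall_and]

lemma alternatesFrom_nil (x y : V) : AlternatesFrom [] x y := by
  simp [alternatesFrom_iff_forall, prefixCount]

lemma alternatesFrom_cons_iff (a : V) (w : List V) (x y : V) :
    AlternatesFrom (a :: w) x y ↔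
      ∀ n, prefixCount w y n + (if a = y then 1 else 0) ≤
          prefixCount w x n + (if a = x then 1 else 0) ∧
        prefixCount w x n + (if a = x then 1 else 0) ≤
          prefixCount w y n + (if a = y then 1 else 0) + 1 := by
  rw [alternatesFrom_iff_forall, ← Nat.and_forall_add_one]
  simp [prefixCount, List.count_cons]

lemma alternatesFrom_cons_of_ne {a : V} (w : List V) {x y : V} (hax : a ≠ x) (hay : a ≠ y) :
    AlternatesFrom (a :: w) x y ↔ AlternatesFrom w x y := by
  rw [alternatesFrom_cons_iff, alternatesFrom_iff_forall]
  simp [hax, hay]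

lemma alternatesFrom_cons_self {x y : V} (w : List V) (hxy : x ≠ y) :
    AlternatesFrom (x :: w) x y ↔ AlternatesFrom w y x := by
  rw [alternatesFrom_cons_iff, alternatesFrom_iff_forall]
  simp [hxy, and_comm]

lemma not_alternatesFrom_cons {x y : V} (w : List V) (hxy : x ≠ y) :
    ¬ AlternatesFrom (y :: w) x y := by
  rw [alternatesFrom_cons_iff]
  simp only [hxy.symm, if_true, if_false, not_forall]
  exact ⟨0, by simp [prefixCount]⟩

lemma filter_decide_or_comm (w : List V) (x y : V) :
    w.filter (fun z => decide (z = x ∨ z = y)) = w.filter (fun z => decide (z = y ∨ z = x)) := by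
  simp only [or_comm]

lemma alternatesFrom_iff_isChain (w : List V) {x y : V} (hxy : x ≠ y) :
    AlternatesFrom w x y ↔ (y :: w.filter (fun z => decide (z = x ∨ z = y))).IsChain (· ≠ ·) := by
  induction w generalizing x y with
  | nil => simp [alternatesFrom_nil]
  | cons a w ih =>
    by_cases hax : a = x
    · subst hax
      rw [alternatesFrom_cons_self w hxy, ih hxy.symm, filter_decide_or_comm]
      simp [hxy.symm]
    by_cases hay : a = y
    · subst hay
      simp [not_alternatesFrom_cons w hxy]
    · rw [alternatesFrom_cons_of_ne w hax hay, ih hxy]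
      simp [hax, hay]

lemma alternate_iff_alternatesFrom (w : List V) {x y : V} (hxy : x ≠ y) :
    Alternate w x y ↔ AlternatesFrom w x y ∨ AlternatesFrom w y x := by
  change (w.filter _).IsChain (· ≠ ·) ↔ _
  rw [alternatesFrom_iff_isChain w hxy, alternatesFrom_iff_isChain w hxy.symm,
    filter_decide_or_comm w y x]
  have hmem : ∀ z ∈ w.filter (fun z => decide (z = x ∨ z = y)), z = x ∨ z = y := by
    simp +contextual
  generalize w.filter (fun z => decide (z = x ∨ z = y)) = f at hmem ⊢
  cases f with
  | nil => simp
  | cons a t =>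
    rcases hmem a (by simp) with rfl | rfl <;> simp [List.isChain_cons_cons, hxy, hxy.symm]

lemma eq_of_prefixCount_eq {w : List V} {x y : V} (hx : x ∈ w)
    (h : prefixCount w x = prefixCount w y) : x = y := by
  obtain ⟨i, hi, rfl⟩ := List.getElem_of_mem hx
  have hstep : ∀ z, prefixCount w z (i + 1) = prefixCount w z i + if w[i] = z then 1 else 0 := by
    intro z
    simp only [prefixCount, ← List.take_concat_get' w i hi, List.count_append,
      List.count_singleton, beq_iff_eq]
  have := congrFun h (i + 1)
  rw [hstep, hstep, congrFun h i] at this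
  by_contra hne
  simp [hne] at this

end Words

section Orientation

variable {V : Type*} [DecidableEq V] {G : SimpleGraph V} {w : List V}

def Represents (w : List V) (G : SimpleGraph V) : Prop :=
  (∀ v : V, v ∈ w) ∧ ∀ x y : V, x ≠ y → (G.Adj x y ↔ Alternate w x y)

def wordOrientation (G : SimpleGraph V) (w : List V) (x y : V) : Prop :=
  G.Adj x y ∧ prefixCount w y < prefixCount w x

lemma Represents.alternatesFrom_or_alternatesFrom (hw : Represents w G) {x y : V}
    (hadj : G.Adj x y) : AlternatesFrom w x y ∨ AlternatesFrom w y x :=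
  (alternate_iff_alternatesFrom w hadj.ne).1 ((hw.2 x y hadj.ne).1 hadj)

lemma Represents.alternatesFrom_of_adj (hw : Represents w G) {x y : V} (hadj : G.Adj x y)
    (hle : prefixCount w y ≤ prefixCount w x) : AlternatesFrom w x y :=
  (hw.alternatesFrom_or_alternatesFrom hadj).resolve_right fun h =>
    hadj.ne (eq_of_prefixCount_eq (hw.1 x) (le_antisymm h.1 hle))

lemma Represents.isOrientation_wordOrientation (hw : Represents w G) :
    IsOrientation G (wordOrientation G w) := by
  refine ⟨fun _ _ h => h.1, fun x y hxy => ⟨fun h h' => lt_asymm h.2 h'.2, fun h => ⟨hxy, ?_⟩⟩⟩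
  have hne : prefixCount w x ≠ prefixCount w y := fun h => hxy.ne (eq_of_prefixCount_eq (hw.1 x) h)
  rcases hw.alternatesFrom_or_alternatesFrom hxy with hxy' | hyx
  · exact hxy'.1.lt_of_ne hne.symm
  · exact absurd ⟨hxy.symm, hyx.1.lt_of_ne hne⟩ h

lemma not_transGen_wordOrientation (v : V) : ¬ Relation.TransGen (wordOrientation G w) v v := by
  suffices ∀ x y, Relation.TransGen (wordOrientation G w) x y → prefixCount w y < prefixCount w x
    from fun hv => lt_irrefl _ (this v v hv)
  intro x y hxy
  induction hxy with
  | single h => exact h.2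
  | tail _ h ih => exact h.2.trans ih

lemma Represents.isSemiTransitive_wordOrientation (hw : Represents w G) :
    IsSemiTransitive G (wordOrientation G w) := by
  refine ⟨not_transGen_wordOrientation, fun k p hp => ?_⟩
  set f := fun i => prefixCount w (p i)
  have hanti : StrictAnti f := Fin.strictAnti_iff_succ_lt.2 fun i => (hp i).2
  by_cases hadj : G.Adj (p 0) (p (Fin.last k))
  · refine .inr fun i j hij => ?_
    have hji : f j < f i := hanti hij
    have hne : p i ≠ p j := fun h => hji.ne (by simp [f, h])
    have hends : f 0 ≤ f (Fin.last k) + 1 :=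
      (hw.alternatesFrom_of_adj hadj (hanti.antitone (Fin.zero_le _))).2
    have hij_alt : AlternatesFrom w (p i) (p j) := by
      refine ⟨hji.le, ?_⟩
      calc f i ≤ f 0 := hanti.antitone (Fin.zero_le _)
        _ ≤ f (Fin.last k) + 1 := hends
        _ ≤ f j + 1 := add_le_add_left (hanti.antitone (Fin.le_last _)) 1
    exact ⟨(hw.2 _ _ hne).2 ((alternate_iff_alternatesFrom w hne).2 (.inl hij_alt)), hji⟩
  · exact .inl hadj

end Orientation

theorem WordRepresentable.exists_isSemiTransitive {V : Type*} [DecidableEq V]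
    {G : SimpleGraph V} (h : WordRepresentable G) :
    ∃ rel, IsOrientation G rel ∧ IsSemiTransitive G rel := by
  obtain ⟨w, hw⟩ := h
  exact ⟨_, Represents.isOrientation_wordOrientation hw,
    Represents.isSemiTransitive_wordOrientation hw⟩

namespace IsSemiTransitive

variable {V : Type*} {G : SimpleGraph V} {rel : V → V → Prop}

lemma rel_of_path_three (hst : IsSemiTransitive G rel) {a b c d : V} (hab : rel a b)
    (hbc : rel b c) (hcd : rel c d) (had : G.Adj a d) : rel a c ∧ rel b d := by
  rcases hst.2 3 ![a, b, c, d] (fun i => by fin_cases i <;> assumption) with h | h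
  · exact absurd had h
  · exact ⟨h 0 2 (by decide), h 1 3 (by decide)⟩

lemma rel_and_rel_of_rel_of_rel (hst : IsSemiTransitive G rel) (hor : IsOrientation G rel)
    {x u v h : V} (hxu : rel x u) (huv : rel u v) (hxh : G.Adj x h) (hhv : G.Adj h v)
    (hxv : ¬ G.Adj x v) : rel x h ∧ rel h v := by
  constructor
  · by_contra hn
    have hhx : rel h x := (hor.2 h x hxh.symm).2 hn
    exact hxv (hor.1 _ _ (hst.rel_of_path_three hhx hxu huv hhv).2)
  · by_contra hn
    have hvh : rel v h := (hor.2 v h hhv.symm).2 hn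
    exact hxv (hor.1 _ _ (hst.rel_of_path_three hxu huv hvh hxh).1)

lemma rel_iff_rel_iff_rel_iff_rel (hst : IsSemiTransitive G rel) (hor : IsOrientation G rel)
    {x u v h : V} (hxu : G.Adj x u) (huv : G.Adj u v) (hxh : G.Adj x h) (hhv : G.Adj h v)
    (hxv : ¬ G.Adj x v) : (rel x u ↔ rel u v) ↔ (rel x h ↔ rel h v) := by
  have hux := hor.2 u x hxu.symm
  have hvu := hor.2 v u huv.symm
  have hhx := hor.2 h x hxh.symm
  have hvh := hor.2 v h hhv.symm
  have hvx : ¬ G.Adj v x := fun h => hxv h.symm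
  have hu : rel x u → rel u v → rel x h ∧ rel h v := fun h₁ h₂ =>
    hst.rel_and_rel_of_rel_of_rel hor h₁ h₂ hxh hhv hxv
  have hu' : rel v u → rel u x → rel v h ∧ rel h x := fun h₁ h₂ =>
    hst.rel_and_rel_of_rel_of_rel hor h₁ h₂ hhv.symm hxh.symm hvx
  have hh : rel x h → rel h v → rel x u ∧ rel u v := fun h₁ h₂ =>
    hst.rel_and_rel_of_rel_of_rel hor h₁ h₂ hxu huv hxv
  have hh' : rel v h → rel h x → rel v u ∧ rel u x := fun h₁ h₂ =>
    hst.rel_and_rel_of_rel_of_rel hor h₁ h₂ huv.symm hxu.symm hvx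
  rw [hvu, hux, hvh, hhx] at hu' hh'
  clear hux hvu hhx hvh
  tauto

end IsSemiTransitive

/-- Both `a` and `b` change value an even number of times around the cycle (`b` along the steps
`i - 1 ↦ i + 1`), whereas the hypothesis makes the two numbers of changes add up to `n`. -/
lemma ZMod.not_forall_iff_iff_iff_not_of_odd {n : ℕ} [NeZero n] (hn : Odd n)
    (a b : ZMod n → Prop) : ¬ ∀ i, (a (i - 1) ↔ a i) ↔ (b (i - 1) ↔ ¬ b (i + 1)) := by
  classical
  intro h
  let χ : Prop → ZMod 2 := fun P => if P then 1 else 0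
  have hlocal : ∀ i, χ (a (i - 1)) + χ (a i) + (χ (b (i - 1)) + χ (b (i + 1))) = 1 := by
    intro i
    have := h i
    simp only [χ]
    split_ifs <;> simp_all <;> decide
  have hshift : ∀ (f : ZMod n → ZMod 2) (k : ZMod n), ∑ i, f (i + k) = ∑ i, f i :=
    fun f k => Equiv.sum_comp (Equiv.addRight k) f
  have hsum := Fintype.sum_congr _ (fun _ => (1 : ZMod 2)) hlocal
  simp only [Finset.sum_add_distrib, sub_eq_add_neg, hshift (fun i => χ (a i)),
    hshift (fun i => χ (b i)), CharTwo.add_self_eq_zero, Finset.sum_const,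
    Finset.card_univ, ZMod.card, nsmul_eq_mul, mul_one, hn.natCast_zmod_two] at hsum
  exact zero_ne_one hsum

theorem not_exists_isSemiTransitive_of_oddWheel {V : Type*} {G : SimpleGraph V} {n : ℕ} [NeZero n]
    (hn : Odd n) (r : ZMod n → V) (h : V) (hrim : ∀ i, G.Adj (r i) (r (i + 1)))
    (hchord : ∀ i, ¬ G.Adj (r i) (r (i + 2))) (hhub : ∀ i, G.Adj (r i) h) :
    ¬ ∃ rel, IsOrientation G rel ∧ IsSemiTransitive G rel := by
  rintro ⟨rel, hor, hst⟩
  refine ZMod.not_forall_iff_iff_iff_not_of_odd hn (fun i => rel (r i) (r (i + 1)))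
    (fun i => rel (r i) h) fun i => ?_
  have hprev : G.Adj (r (i - 1)) (r i) := by simpa using hrim (i - 1)
  have hchord' : ¬ G.Adj (r (i - 1)) (r (i + 1)) := by
    simpa [show i - 1 + 2 = i + 1 by ring] using hchord (i - 1)
  have hlocal := hst.rel_iff_rel_iff_rel_iff_rel hor hprev (hrim i) (hhub (i - 1))
    (hhub (i + 1)).symm hchord'
  simp only [sub_add_cancel]
  rw [hlocal, hor.2 h (r (i + 1)) (hhub (i + 1)).symm]

lemma simplifiedDeBruijn_two_adj_iff {k : ℕ} (u v : Fin 2 → Fin k) :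
    (simplifiedDeBruijn 2 k).Adj u v ↔ u ≠ v ∧ (v 0 = u 1 ∨ u 0 = v 1) := by
  have hshift : ∀ u v : Fin 2 → Fin k, debruijnShift 2 k u v ↔ v 0 = u 1 := fun u v =>
    ⟨fun h => h 0 one_lt_two, fun h i hi => by obtain rfl : i = 0 := (by omega); exact h⟩
  simp [simplifiedDeBruijn, hshift]

instance {k : ℕ} : DecidableRel (simplifiedDeBruijn 2 k).Adj := fun u v =>
  decidable_of_iff' _ (simplifiedDeBruijn_two_adj_iff u v)

/-- The simplified de Bruijn graph `S(2,3)` is not word-representable. -/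
theorem simplifiedDeBruijn_two_three_not_wordRepresentable :
    ¬ WordRepresentable (simplifiedDeBruijn 2 3) := by
  intro hw
  let r : ZMod 5 → Fin 2 → Fin 3 := ![![1, 0], ![1, 1], ![1, 2], ![2, 0], ![0, 0]]
  refine not_exists_isSemiTransitive_of_oddWheel (by decide) r ![0, 1] ?_ ?_ ?_
    hw.exists_isSemiTransitive <;> intro i <;> fin_cases i <;> decide
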